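/- arXiv:0804.1395 — 3 statements merged into one kernel-verified Lean document; each statement's English description precedes it below -/
import Mathlib

section
/- For every integer d ≥ 2 and every ε > 0 there exists η = η(ε, d) > 0 with the following property: for every a ∈ SL_d(ℂ) whose eigenvalues do not all have the same modulus, there exists a real number ω with Λ(a⁻¹)⁻¹ < ω ≤ Λ(a) such that A^η · (Λ(a)/Λ^ω(a))^{1/ε} ≤ Λ^ω(a)/λ^ω(a), where A = Λ(a)·Λ(a⁻¹), Λ(a) is the maximal modulus of the eigenvalues of a, Λ^ω(a) = min{ |μ| : μ eigenvalue of a, |μ| ≥ ω }, and λ^ω(a) = max{ |μ| : μ eigenvalue of a, |μ| < ω }. -/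
/-!
List the distinct eigenvalue moduli as `m = t₀ < t₁ < ⋯ < t_k = M`, so `k < d` and `A = M / m`.
Suppose the desired inequality fails at every `ω = t_j`, `j ≥ 1`. With `u_j = log (M / t_j)` and
`c = 1/ε` this says `u_{j-1} < η log A + (1 + c) u_j`, and since `u_k = 0` the recursion gives
`u_j ≤ η log A ((1 + c)^(k-j) - 1) / c`. For `j = 0` and `η = c / (1 + c)^d` the right-hand side
is less than `log A = u₀`, a contradiction.
-/

open Set

theorem Set.Finite.exists_succ {α : Type*} [ConditionallyCompleteLinearOrder α] {T : Set α}
    (hT : T.Finite) {x : α} (hx : x ∈ T)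
    (hne : {r ∈ T | x < r}.Nonempty) :
    ∃ y ∈ T, x < y ∧ sSup {r ∈ T | r < y} = x ∧
      {r ∈ T | y < r}.ncard + 1 = {r ∈ T | x < r}.ncard := by
  set S := {r ∈ T | x < r}
  have hSfin : S.Finite := hT.subset (sep_subset _ _)
  obtain ⟨⟨hyT, hxy⟩, hy_le⟩ : IsLeast S (sInf S) :=
    ⟨hne.csInf_mem hSfin, fun r hr => csInf_le hSfin.bddBelow hr⟩
  set y := sInf S
  refine ⟨y, hyT, hxy, ?_, ?_⟩
  · refine IsGreatest.csSup_eq ⟨⟨hx, hxy⟩, fun r ⟨hrT, hry⟩ => ?_⟩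
    by_contra! hxr
    exact (hy_le ⟨hrT, hxr⟩).not_gt hry
  · have hS : {r ∈ T | y < r} = S \ {y} := by
      ext r
      refine ⟨fun ⟨hrT, hyr⟩ => ⟨⟨hrT, hxy.trans hyr⟩, hyr.ne'⟩,
        fun ⟨hrS, hry⟩ => ⟨hrS.1, (hy_le hrS).lt_of_ne' hry⟩⟩
    rw [hS, ncard_sdiff_singleton_add_one (show y ∈ S from ⟨hyT, hxy⟩) hSfin]

theorem csInf_lt_csSup_of_mem_of_ne {α : Type*} [ConditionallyCompleteLinearOrder α] {T : Set α}
    (hb : BddBelow T) (ha : BddAbove T) {x y : α} (hx : x ∈ T) (hy : y ∈ T) (hxy : x ≠ y) :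
    sInf T < sSup T :=
  calc sInf T ≤ min x y := le_min (csInf_le hb hx) (csInf_le hb hy)
    _ < max x y := min_lt_max.2 hxy
    _ ≤ sSup T := max_le (le_csSup ha hx) (le_csSup ha hy)

theorem IsLeast.csSup_inv_of_pos {T : Set ℝ} {m : ℝ} (h : IsLeast T m) (hm : 0 < m) :
    sSup T⁻¹ = m⁻¹ :=
  IsGreatest.csSup_eq ⟨by simpa using h.1, fun r hr => by simpa using inv_anti₀ hm (h.2 hr)⟩

theorem div_le_rpow_of_forall_gap_lt {T : Set ℝ} (hT : T.Finite) (hpos : ∀ r ∈ T, 0 < r)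
    {B c : ℝ} (hB : 0 < B) (hc : 0 < c)
    (hgap : ∀ y ∈ T, sInf T < y → y / sSup {r ∈ T | r < y} < B * (sSup T / y) ^ c)
    {x : ℝ} (hx : x ∈ T) :
    sSup T / x ≤ B ^ (((1 + c) ^ {r ∈ T | x < r}.ncard - 1) / c) := by
  set M := sSup T
  induction hk : {r ∈ T | x < r}.ncard generalizing x with
  | zero =>
    have hxM : x = M := by
      refine le_antisymm (le_csSup hT.bddAbove hx) (csSup_le ⟨x, hx⟩ fun r hr => ?_)
      by_contra! hxr
      exact (ncard_pos (hT.subset (sep_subset _ _))).2 ⟨r, hr, hxr⟩ |>.ne' hk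
    simp [hxM, div_self (hpos M (hxM ▸ hx)).ne']
  | succ k ih =>
    obtain ⟨y, hyT, hxy, hsup, hcard⟩ :=
      hT.exists_succ hx (nonempty_of_ncard_ne_zero (by omega))
    have hMy : 0 < M / y := div_pos (hpos _ (Set.nonempty_of_mem hx |>.csSup_mem hT)) (hpos y hyT)
    have hstep : y / x < B * (M / y) ^ c := by
      simpa [hsup] using hgap y hyT ((csInf_le hT.bddBelow hx).trans_lt hxy)
    calc M / x = M / y * (y / x) := by field_simp [(hpos y hyT).ne']
      _ ≤ M / y * (B * (M / y) ^ c) := by gcongr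
      _ = B * (M / y) ^ (1 + c) := by rw [Real.rpow_add hMy, Real.rpow_one]; ring
      _ ≤ B * (B ^ (((1 + c) ^ k - 1) / c)) ^ (1 + c) := by
        gcongr; exact ih hyT (by omega)
      _ = B ^ (1 + ((1 + c) ^ k - 1) / c * (1 + c)) := by
        rw [← Real.rpow_mul hB.le, Real.rpow_add hB, Real.rpow_one]
      _ = B ^ (((1 + c) ^ (k + 1) - 1) / c) := by
        congr 1; field_simp; ring

theorem exists_gap_of_finite {T : Set ℝ} (hT : T.Finite) (hpos : ∀ r ∈ T, 0 < r) {n : ℕ}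
    (hcard : T.ncard ≤ n) (hlt : sInf T < sSup T) {c : ℝ} (hc : 0 < c) :
    ∃ x ∈ T, sInf T < x ∧
      (sSup T / sInf T) ^ (c / (1 + c) ^ n) * (sSup T / x) ^ c ≤ x / sSup {r ∈ T | r < x} := by
  have hne : T.Nonempty := by
    by_contra h
    simp [not_nonempty_iff_eq_empty.1 h] at hlt
  have hm := hne.csInf_mem hT
  set A := sSup T / sInf T
  have hA : 1 < A := (one_lt_div (hpos _ hm)).2 hlt
  by_contra! hgap
  set k := {r ∈ T | sInf T < r}.ncard
  have hk : k ≤ n := (ncard_le_ncard (sep_subset _ _) hT).trans hcard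
  have hexp : c / (1 + c) ^ n * (((1 + c) ^ k - 1) / c) < 1 := by
    have : (1 + c) ^ k ≤ (1 + c) ^ n := pow_le_pow_right₀ (by linarith) hk
    rw [mul_comm, div_mul_div_cancel₀ hc.ne', div_lt_one (by positivity)]
    linarith
  have := div_le_rpow_of_forall_gap_lt hT hpos (by positivity) hc hgap hm
  rw [← Real.rpow_mul (by positivity)] at this
  exact this.not_gt (Real.rpow_lt_self_of_one_lt hA hexp)

theorem Set.image_norm_inv {E : Type*} [NormedDivisionRing E] (S : Set E) :
    (fun z => ‖z‖) '' S⁻¹ = ((fun z => ‖z‖) '' S)⁻¹ := by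
  ext r
  simp [inv_eq_iff_eq_inv]

theorem Matrix.ncard_spectrum_le {n K : Type*} [Fintype n] [DecidableEq n] [Field K]
    (A : Matrix n n K) : (spectrum K A).ncard ≤ Fintype.card n := by
  classical
  have : spectrum K A = ↑A.charpoly.roots.toFinset := by
    ext r
    simp [Matrix.mem_spectrum_iff_isRoot_charpoly, A.charpoly_monic.ne_zero]
  rw [this, ncard_coe_finset, ← A.charpoly_natDegree_eq_dim]
  exact (Multiset.toFinset_card_le _).trans (Polynomial.card_roots' _)

theorem Matrix.spectrum_nonsing_inv {n K : Type*} [Fintype n] [DecidableEq n] [Field K]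
    {A : Matrix n n K} (hA : IsUnit A) : spectrum K A⁻¹ = (spectrum K A)⁻¹ := by
  rw [← hA.unit_spec, ← Matrix.coe_units_inv, spectrum.map_inv]

/-- **Almost proximal gap.** For every `d ≥ 2` and `ε > 0` there is `η = η(ε,d) > 0` such that
for every `a ∈ SL_d(ℂ)` whose eigenvalues do not all have the same modulus, there is a real
number `ω` with `Λ(a⁻¹)⁻¹ < ω ≤ Λ(a)` and
`A^η · (Λ(a)/Λ^ω(a))^{1/ε} ≤ Λ^ω(a)/λ^ω(a)`, where `A = Λ(a)·Λ(a⁻¹)`. -/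
theorem almost_proximal_gap :
    ∀ d : ℕ, 2 ≤ d → ∀ ε : ℝ, 0 < ε → ∃ η : ℝ, 0 < η ∧
      ∀ a : Matrix (Fin d) (Fin d) ℂ, a.det = 1 →
        (∃ μ ∈ spectrum ℂ a, ∃ ν ∈ spectrum ℂ a, ‖μ‖ ≠ ‖ν‖) →
        ∃ ω : ℝ,
          sInf ((fun z : ℂ => ‖z‖) '' spectrum ℂ a) < ω ∧
          ω ≤ sSup ((fun z : ℂ => ‖z‖) '' spectrum ℂ a) ∧
          (sSup ((fun z : ℂ => ‖z‖) '' spectrum ℂ a) * sSup ((fun z : ℂ => ‖z‖) '' spectrum ℂ a⁻¹)) ^ η *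
              (sSup ((fun z : ℂ => ‖z‖) '' spectrum ℂ a) /
                sInf {r ∈ (fun z : ℂ => ‖z‖) '' spectrum ℂ a | ω ≤ r}) ^ (1 / ε) ≤
            sInf {r ∈ (fun z : ℂ => ‖z‖) '' spectrum ℂ a | ω ≤ r} /
              sSup {r ∈ (fun z : ℂ => ‖z‖) '' spectrum ℂ a | r < ω} := by
  intro d _ ε hε
  set c := 1 / ε
  refine ⟨c / (1 + c) ^ d, by positivity, fun a hdet ⟨μ, hμ, ν, hν, hμν⟩ => ?_⟩
  have hU : IsUnit a := (Matrix.isUnit_iff_isUnit_det a).2 (hdet ▸ isUnit_one)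
  set T := (fun z : ℂ => ‖z‖) '' spectrum ℂ a
  have hspec : (spectrum ℂ a).Finite := Matrix.finite_spectrum a
  have hT : T.Finite := hspec.image _
  have hpos : ∀ r ∈ T, 0 < r := by
    rintro _ ⟨z, hz, rfl⟩
    exact norm_pos_iff.2 fun h => spectrum.zero_notMem ℂ hU (h ▸ hz)
  have hcard : T.ncard ≤ d := (ncard_image_le hspec).trans (by simpa using a.ncard_spectrum_le)
  have hμT : ‖μ‖ ∈ T := mem_image_of_mem _ hμ
  have hlt := csInf_lt_csSup_of_mem_of_ne hT.bddBelow hT.bddAbove hμT (mem_image_of_mem _ hν) hμν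
  have hleast : IsLeast T (sInf T) :=
    ⟨Set.nonempty_of_mem hμT |>.csInf_mem hT, fun _ hr => csInf_le hT.bddBelow hr⟩
  have hinv : sSup ((fun z : ℂ => ‖z‖) '' spectrum ℂ a⁻¹) = (sInf T)⁻¹ := by
    rw [Matrix.spectrum_nonsing_inv hU, image_norm_inv, hleast.csSup_inv_of_pos (hpos _ hleast.1)]
  obtain ⟨x, hxT, hxlt, hx⟩ := exists_gap_of_finite hT hpos hcard hlt (by positivity : 0 < c)
  have hxinf : sInf {r ∈ T | x ≤ r} = x := IsLeast.csInf_eq ⟨⟨hxT, le_rfl⟩, fun _ hr => hr.2⟩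
  refine ⟨x, hxlt, le_csSup hT.bddAbove hxT, ?_⟩
  rwa [hxinf, hinv, ← div_eq_mul_inv]
end

section
/- Let a ∈ SL_d(ℂ). Then there exists h ∈ SL_d(ℂ) such that ‖h a h⁻¹‖ ≤ d · Λ(a) and max{‖h‖, ‖h⁻¹‖} ≤ ‖a‖^{(d−1)/2}, where Λ(a) is the maximal modulus of the eigenvalues of a and ‖·‖ is the operator norm induced by the Hermitian norm on ℂ^d. -/
/-!
Schur triangulation gives `a = U T U⋆` with `U` special unitary and `T` upper triangular; the
diagonal of `T` is the spectrum of `a`, its product is `det a = 1`, and every entry of `T` is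
bounded by `‖T‖ = ‖a‖`. Conjugating `T` by `diag(t ^ (i - (d - 1) / 2))` with `t = ‖a‖ / Λ(a) ≥ 1`
multiplies the `(i, j)` entry by `t ^ (i - j)`, so all entries of the result are at most `Λ(a)`
and its norm is at most `d Λ(a)`. The conjugator has determinant one, and it and its inverse have
norm at most `t ^ ((d - 1) / 2) ≤ ‖a‖ ^ ((d - 1) / 2)`.
-/

/-- The operator norm on `d×d` complex matrices induced by the Hermitian norm on `ℂ^d`. -/
noncomputable def matrixOpNorm {d : ℕ} (M : Matrix (Fin d) (Fin d) ℂ) : ℝ :=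
  ‖LinearMap.toContinuousLinearMap (Matrix.toEuclideanLin M)‖

open Module Matrix Polynomial
open scoped InnerProductSpace Matrix.Norms.L2Operator

theorem Orthonormal.snoc {𝕜 V : Type*} [RCLike 𝕜] [NormedAddCommGroup V] [InnerProductSpace 𝕜 V]
    {n : ℕ} {c : Fin n → V} (hc : Orthonormal 𝕜 c) {u : V} (hu : ‖u‖ = 1)
    (hcu : ∀ i, ⟪c i, u⟫_𝕜 = 0) : Orthonormal 𝕜 (Fin.snoc c u : Fin (n + 1) → V) := by
  refine ⟨fun i => ?_, fun i j hij => ?_⟩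
  · induction i using Fin.lastCases <;> simp [hu, hc.1]
  · induction i using Fin.lastCases <;> induction j using Fin.lastCases
    · exact absurd rfl hij
    · simp [inner_eq_zero_symm.mp (hcu _)]
    · simp [hcu]
    · simpa using hc.2 (fun h => hij (by rw [h]))

theorem orthogonal_span_singleton_mem_invtSubmodule {𝕜 V : Type*} [RCLike 𝕜]
    [NormedAddCommGroup V] [InnerProductSpace 𝕜 V] [FiniteDimensional 𝕜 V] {f : V →ₗ[𝕜] V}
    {μ : 𝕜} {v : V} (hv : f.adjoint v = μ • v) : (𝕜 ∙ v)ᗮ ∈ Module.End.invtSubmodule f := by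
  refine Module.End.mem_invtSubmodule_adjoint_iff.mp ?_
  rw [Module.End.mem_invtSubmodule_iff_map_le, Submodule.map_span, Set.image_singleton, hv]
  exact Submodule.span_le.mpr
    (by simpa using Submodule.smul_mem _ μ (Submodule.mem_span_singleton_self v))

/-- Schur triangulation. The last vector is a unit eigenvector of the adjoint: its orthogonal
complement is `f`-invariant, and the remaining vectors come from that complement by induction. -/
theorem exists_orthonormal_inner_apply_eq_zero_of_lt {V : Type*} [NormedAddCommGroup V]
    [InnerProductSpace ℂ V] [FiniteDimensional ℂ V] {n : ℕ} (hn : finrank ℂ V = n)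
    (f : V →ₗ[ℂ] V) :
    ∃ b : Fin n → V, Orthonormal ℂ b ∧ ∀ i j, j < i → ⟪b i, f (b j)⟫_ℂ = 0 := by
  induction n generalizing V with
  | zero => exact ⟨Fin.elim0, ⟨fun i => i.elim0, fun i => i.elim0⟩, fun i => i.elim0⟩
  | succ n ih =>
    have : Nontrivial V := Module.nontrivial_of_finrank_eq_succ hn
    have : Fact (finrank ℂ V = n + 1) := ⟨hn⟩
    obtain ⟨μ, hμ⟩ := Module.End.exists_eigenvalue f.adjoint
    obtain ⟨v, hv⟩ := hμ.exists_hasEigenvector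
    set W := (ℂ ∙ v)ᗮ
    have hW : W ∈ Module.End.invtSubmodule f :=
      orthogonal_span_singleton_mem_invtSubmodule hv.apply_eq_smul
    obtain ⟨c, hc, hcf⟩ := ih (Submodule.finrank_orthogonal_span_singleton hv.2) (f.restrict hW)
    set u : V := (‖v‖⁻¹ : ℂ) • v
    have hu : u ∈ ℂ ∙ v := Submodule.smul_mem _ _ (Submodule.mem_span_singleton_self v)
    refine ⟨Fin.snoc (W.subtypeₗᵢ ∘ c) u,
      (hc.comp_linearIsometry W.subtypeₗᵢ).snoc (norm_smul_inv_norm hv.2)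
        fun i => Submodule.inner_left_of_mem_orthogonal hu (c i).2, fun i j hij => ?_⟩
    induction i using Fin.lastCases <;> induction j using Fin.lastCases
    · exact absurd hij (lt_irrefl _)
    · simpa using Submodule.inner_right_of_mem_orthogonal hu (hW (c _).2)
    · exact absurd hij (not_lt.mpr (Fin.le_last _))
    · simp only [Fin.snoc_castSucc, Function.comp_apply, Submodule.coe_subtypeₗᵢ]
      exact (Submodule.coe_inner W _ _).symm.trans (hcf _ _ (Fin.castSucc_lt_castSucc_iff.mp hij))

section SpectralBound

variable {𝕜 A : Type*} [NormedField 𝕜] [NormedRing A] [NormedAlgebra 𝕜 A] [CompleteSpace A]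
  [NormOneClass A]

theorem norm_le_sSup_norm_spectrum {a : A} {z : 𝕜} (hz : z ∈ spectrum 𝕜 a) :
    ‖z‖ ≤ sSup ((fun z : 𝕜 => ‖z‖) '' spectrum 𝕜 a) :=
  le_csSup ⟨‖a‖, Set.forall_mem_image.2 fun _ => spectrum.norm_le_norm_of_mem⟩ ⟨z, hz, rfl⟩

theorem sSup_norm_spectrum_le_norm (a : A) : sSup ((fun z : 𝕜 => ‖z‖) '' spectrum 𝕜 a) ≤ ‖a‖ :=
  Real.sSup_le (Set.forall_mem_image.2 fun _ => spectrum.norm_le_norm_of_mem) (norm_nonneg a)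

end SpectralBound

theorem EuclideanSpace.sq_sum_norm_le_card_mul_sq_norm {𝕜 n : Type*} [RCLike 𝕜] [Fintype n]
    (x : EuclideanSpace 𝕜 n) : (∑ j, ‖x j‖) ^ 2 ≤ Fintype.card n * ‖x‖ ^ 2 := by
  simpa [EuclideanSpace.norm_sq_eq] using
    sq_sum_le_card_mul_sum_sq (s := Finset.univ) (f := fun j => ‖x j‖)

theorem matrixOpNorm_eq_l2_opNorm {d : ℕ} (M : Matrix (Fin d) (Fin d) ℂ) :
    matrixOpNorm M = ‖M‖ :=
  rfl

namespace Matrix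

theorem IsUpperTriangular.spectrum_eq {K n : Type*} [Field K] [Fintype n] [DecidableEq n]
    [LinearOrder n] {T : Matrix n n K} (hT : T.IsUpperTriangular) :
    spectrum K T = Set.range T.diag := by
  ext z
  simp [mem_spectrum_iff_isRoot_charpoly, charpoly_of_isUpperTriangular T hT, eval_prod,
    eq_comm (a := z), Finset.prod_eq_zero_iff, sub_eq_zero]

theorem IsUpperTriangular.one_le_of_norm_diag_le {𝕜 n : Type*} [RCLike 𝕜] [Fintype n]
    [DecidableEq n] [LinearOrder n] [Nonempty n] {T : Matrix n n 𝕜} (hT : T.IsUpperTriangular)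
    (hdet : T.det = 1) {Λ : ℝ} (hΛ : ∀ i, ‖T i i‖ ≤ Λ) : 1 ≤ Λ := by
  have hΛ0 : 0 ≤ Λ := (norm_nonneg _).trans (hΛ (Classical.arbitrary n))
  refine (one_le_pow_iff_of_nonneg hΛ0 (Fintype.card_ne_zero (α := n))).mp ?_
  calc (1 : ℝ) = ∏ i, ‖T i i‖ := by rw [← norm_prod, ← det_of_isUpperTriangular hT, hdet, norm_one]
    _ ≤ ∏ _i : n, Λ := Finset.prod_le_prod (fun i _ => norm_nonneg _) fun i _ => hΛ i
    _ = Λ ^ Fintype.card n := by simp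

section L2OpNorm

variable {𝕜 n : Type*} [RCLike 𝕜] [Fintype n]

theorem norm_apply_le_l2_opNorm [DecidableEq n] (A : Matrix n n 𝕜) (i j : n) : ‖A i j‖ ≤ ‖A‖ := by
  have hcol : A i j = (toEuclideanCLM (𝕜 := 𝕜) A (EuclideanSpace.single j 1)) i := by
    simp [ofLp_toEuclideanCLM]
  calc ‖A i j‖ ≤ ‖toEuclideanCLM (𝕜 := 𝕜) A (EuclideanSpace.single j 1)‖ :=
        hcol ▸ PiLp.norm_apply_le _ i
    _ ≤ ‖A‖ * ‖EuclideanSpace.single j (1 : 𝕜)‖ := (toEuclideanCLM (𝕜 := 𝕜) A).le_opNorm _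
    _ = ‖A‖ := by simp

theorem l2_opNorm_le_card_mul [DecidableEq n] {A : Matrix n n 𝕜} {c : ℝ} (hc : 0 ≤ c)
    (hA : ∀ i j, ‖A i j‖ ≤ c) : ‖A‖ ≤ Fintype.card n * c := by
  refine ContinuousLinearMap.opNorm_le_bound _ (by positivity) fun x => ?_
  have hrow : ∀ i, ‖(A *ᵥ x.ofLp) i‖ ≤ c * ∑ j, ‖x j‖ := fun i =>
    calc ‖∑ j, A i j * x j‖ ≤ ∑ j, ‖A i j‖ * ‖x j‖ :=
          (norm_sum_le _ _).trans_eq (by simp only [norm_mul])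
      _ ≤ c * ∑ j, ‖x j‖ := by
        rw [Finset.mul_sum]; gcongr with j; exact hA i j
  refine le_of_pow_le_pow_left₀ two_ne_zero (by positivity) ?_
  calc ‖toEuclideanCLM (𝕜 := 𝕜) A x‖ ^ 2 = ∑ i, ‖(A *ᵥ x.ofLp) i‖ ^ 2 := by
        simp [EuclideanSpace.norm_sq_eq, ofLp_toEuclideanCLM]
    _ ≤ ∑ _i : n, c ^ 2 * (Fintype.card n * ‖x‖ ^ 2) := by
        gcongr with i
        calc ‖(A *ᵥ x.ofLp) i‖ ^ 2 ≤ (c * ∑ j, ‖x j‖) ^ 2 := by gcongr; exact hrow i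
          _ ≤ c ^ 2 * (Fintype.card n * ‖x‖ ^ 2) := by
            rw [mul_pow]; gcongr; exact EuclideanSpace.sq_sum_norm_le_card_mul_sq_norm x
    _ = (Fintype.card n * c * ‖x‖) ^ 2 := by
        simp only [Finset.sum_const, Finset.card_univ, nsmul_eq_mul]; ring

end L2OpNorm

section Unitary

variable {𝕜 n m : Type*} [RCLike 𝕜] [Fintype n] [DecidableEq n]

theorem conjTranspose_of_mul_mul_of_apply (A : Matrix n n 𝕜) (b : m → EuclideanSpace 𝕜 n)
    (i j : m) :
    ((of fun k l => b l k)ᴴ * A * of fun k l => b l k) i j = ⟪b i, toEuclideanLin A (b j)⟫_𝕜 := by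
  simp only [mul_apply, conjTranspose_apply, of_apply, EuclideanSpace.inner_eq_star_dotProduct,
    ofLp_toLpLin, toLin'_apply, Pi.star_apply, dotProduct, mulVec, Finset.sum_mul]
  rw [Finset.sum_comm]
  simp only [mul_assoc, mul_comm (star _)]

theorem exists_mem_unitaryGroup_isUpperTriangular {d : ℕ} (a : Matrix (Fin d) (Fin d) ℂ) :
    ∃ U ∈ unitaryGroup (Fin d) ℂ, (star U * a * U).IsUpperTriangular := by
  obtain ⟨b, hb, hba⟩ :=
    exists_orthonormal_inner_apply_eq_zero_of_lt finrank_euclideanSpace_fin (toEuclideanLin a)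
  refine ⟨of fun k l => b l k, ?_, fun i j hij => ?_⟩
  · rw [mem_unitaryGroup_iff']
    ext i j
    simpa [star_eq_conjTranspose, one_apply, orthonormal_iff_ite.mp hb] using
      conjTranspose_of_mul_mul_of_apply 1 b i j
  · rw [star_eq_conjTranspose, conjTranspose_of_mul_mul_of_apply]
    exact hba i j hij

theorem exists_smul_mem_specialUnitaryGroup [Nonempty n] {U : Matrix n n ℂ}
    (hU : U ∈ unitaryGroup n ℂ) : ∃ c ∈ unitary ℂ, c • U ∈ specialUnitaryGroup n ℂ := by
  have hdetU := det_of_mem_unitary hU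
  obtain ⟨c, hc⟩ := IsAlgClosed.exists_pow_nat_eq (star U.det) (Fintype.card_pos (α := n))
  have hc1 : ‖c‖ = 1 := by
    rw [← pow_eq_one_iff_of_nonneg (norm_nonneg c) (Fintype.card_ne_zero (α := n)), ← norm_pow,
      hc, CStarRing.norm_of_mem_unitary (Unitary.star_mem hdetU)]
  have hcu : c ∈ unitary ℂ := by
    rw [Unitary.mem_iff_star_mul_self, RCLike.star_def, RCLike.conj_mul, hc1]
    simp
  refine ⟨c, hcu, mem_specialUnitaryGroup_iff.mpr ⟨Unitary.smul_mem_of_mem hcu hU, ?_⟩⟩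
  rw [det_smul, hc, Unitary.star_mul_self_of_mem hdetU]

theorem exists_mem_specialUnitaryGroup_isUpperTriangular {d : ℕ} [NeZero d]
    (a : Matrix (Fin d) (Fin d) ℂ) :
    ∃ U ∈ specialUnitaryGroup (Fin d) ℂ, (star U * a * U).IsUpperTriangular := by
  obtain ⟨U, hU, hT⟩ := exists_mem_unitaryGroup_isUpperTriangular a
  obtain ⟨c, hc, hcU⟩ := exists_smul_mem_specialUnitaryGroup hU
  have hconj : star (c • U) * a * (c • U) = star U * a * U := by
    simp only [star_smul, smul_mul_assoc, mul_smul_comm, smul_smul, Unitary.mul_star_self_of_mem hc,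
      one_smul]
  exact ⟨c • U, hcU, hconj ▸ hT⟩

end Unitary

end Matrix

theorem Finset.sum_range_natCast_eq (d : ℕ) :
    ∑ i ∈ Finset.range d, (i : ℝ) = d * ((d : ℝ) - 1) / 2 := by
  induction d with
  | zero => simp
  | succ d ih => rw [Finset.sum_range_succ, ih]; push_cast; ring

noncomputable def balancing (d : ℕ) (t : ℝ) : Matrix (Fin d) (Fin d) ℂ :=
  diagonal fun i => ((t ^ ((i : ℝ) - ((d : ℝ) - 1) / 2) : ℝ) : ℂ)

section Balancing

variable {d : ℕ} {t : ℝ}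

theorem det_balancing (ht : 0 < t) : (balancing d t).det = 1 := by
  have hexp : ∑ i : Fin d, ((i : ℝ) - ((d : ℝ) - 1) / 2) = 0 := by
    rw [Finset.sum_sub_distrib, Fin.sum_univ_eq_sum_range (fun i => (i : ℝ)),
      Finset.sum_range_natCast_eq]
    simp only [Finset.sum_const, Finset.card_univ, Fintype.card_fin, nsmul_eq_mul]
    ring
  rw [balancing, det_diagonal, ← Complex.ofReal_prod, ← Real.rpow_sum_of_pos ht, hexp,
    Real.rpow_zero, Complex.ofReal_one]

theorem balancing_mul_balancing_inv (ht : 0 < t) : balancing d t * balancing d t⁻¹ = 1 := by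
  rw [balancing, balancing, diagonal_mul_diagonal, ← diagonal_one]
  refine congrArg diagonal (funext fun i => ?_)
  rw [Real.inv_rpow ht.le, Complex.ofReal_inv,
    mul_inv_cancel₀ (Complex.ofReal_ne_zero.mpr (Real.rpow_pos_of_pos ht _).ne')]

theorem balancing_mul_mul_balancing_inv_apply (ht : 0 < t) (T : Matrix (Fin d) (Fin d) ℂ)
    (i j : Fin d) :
    (balancing d t * T * balancing d t⁻¹) i j = ((t ^ ((i : ℝ) - j) : ℝ) : ℂ) * T i j := by
  rw [balancing, balancing, mul_diagonal, diagonal_mul, Real.inv_rpow ht.le, ← Real.rpow_neg ht.le,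
    mul_right_comm, ← Complex.ofReal_mul, ← Real.rpow_add ht]
  ring_nf

theorem l2_opNorm_balancing_conj_le [NeZero d] {T : Matrix (Fin d) (Fin d) ℂ}
    (hT : T.IsUpperTriangular) (ht : 1 ≤ t) {Λ : ℝ} (hdiag : ∀ i, ‖T i i‖ ≤ Λ)
    (hT_le : ∀ i j, ‖T i j‖ ≤ t * Λ) :
    ‖balancing d t * T * balancing d t⁻¹‖ ≤ d * Λ := by
  have ht0 : 0 < t := one_pos.trans_le ht
  have hΛ : 0 ≤ Λ := (norm_nonneg _).trans (hdiag 0)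
  refine (l2_opNorm_le_card_mul hΛ fun i j => ?_).trans_eq (by simp)
  rw [balancing_mul_mul_balancing_inv_apply ht0, norm_mul, Complex.norm_real,
    Real.norm_of_nonneg (by positivity)]
  rcases lt_trichotomy i j with hij | rfl | hij
  · calc t ^ ((i : ℝ) - j) * ‖T i j‖ ≤ t ^ (-1 : ℝ) * (t * Λ) := by
          gcongr
          · have : (i : ℝ) + 1 ≤ j := by exact_mod_cast hij
            linarith
          · exact hT_le i j
      _ = Λ := by rw [Real.rpow_neg_one, inv_mul_cancel_left₀ ht0.ne']
  · simpa using hdiag i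
  · simpa [hT hij] using hΛ

theorem l2_opNorm_balancing_le (ht : 1 ≤ t) : ‖balancing d t‖ ≤ t ^ (((d : ℝ) - 1) / 2) := by
  rw [balancing, l2_opNorm_diagonal]
  refine (pi_norm_le_iff_of_nonneg (by positivity)).mpr fun i => ?_
  rw [Complex.norm_real, Real.norm_of_nonneg (by positivity)]
  have : (i : ℝ) + 1 ≤ d := by exact_mod_cast i.isLt
  exact Real.rpow_le_rpow_of_exponent_le ht (by linarith)

theorem l2_opNorm_balancing_inv_le (ht : 1 ≤ t) : ‖balancing d t⁻¹‖ ≤ t ^ (((d : ℝ) - 1) / 2) := by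
  rw [balancing, l2_opNorm_diagonal]
  refine (pi_norm_le_iff_of_nonneg (by positivity)).mpr fun i => ?_
  rw [Complex.norm_real, Real.norm_of_nonneg (by positivity), Real.inv_rpow (by positivity),
    ← Real.rpow_neg (by positivity)]
  exact Real.rpow_le_rpow_of_exponent_le ht (by linarith [(i : ℕ).cast_nonneg (α := ℝ)])

end Balancing

theorem balancing_mul_star_inv {d : ℕ} {t : ℝ} (ht : 0 < t) {U : Matrix (Fin d) (Fin d) ℂ}
    (hU : U ∈ unitaryGroup (Fin d) ℂ) : (balancing d t * star U)⁻¹ = U * balancing d t⁻¹ :=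
  inv_eq_right_inv <| by
    rw [mul_assoc, ← mul_assoc (star U), Unitary.star_mul_self_of_mem hU, one_mul,
      balancing_mul_balancing_inv ht]

theorem exists_det_eq_one_conj_l2_opNorm_le {d : ℕ} [NeZero d] {a U : Matrix (Fin d) (Fin d) ℂ}
    (hSU : U ∈ specialUnitaryGroup (Fin d) ℂ) (hT : (star U * a * U).IsUpperTriangular) {Λ : ℝ}
    (hΛ : 1 ≤ Λ) (hΛa : Λ ≤ ‖a‖) (hdiag : ∀ i, ‖(star U * a * U) i i‖ ≤ Λ) :
    ∃ h : Matrix (Fin d) (Fin d) ℂ, h.det = 1 ∧ ‖h * a * h⁻¹‖ ≤ d * Λ ∧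
      max ‖h‖ ‖h⁻¹‖ ≤ ‖a‖ ^ (((d : ℝ) - 1) / 2) := by
  obtain ⟨hU, hdetU⟩ := mem_specialUnitaryGroup_iff.mp hSU
  set t := ‖a‖ / Λ
  have ht : 1 ≤ t := (one_le_div (by linarith)).mpr hΛa
  have ht0 : 0 < t := one_pos.trans_le ht
  have hta : t ^ (((d : ℝ) - 1) / 2) ≤ ‖a‖ ^ (((d : ℝ) - 1) / 2) :=
    Real.rpow_le_rpow ht0.le (div_le_self (norm_nonneg a) hΛ)
      (by linarith [show (1 : ℝ) ≤ d by exact_mod_cast NeZero.one_le])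
  refine ⟨balancing d t * star U,
    by simp [det_mul, det_balancing ht0, star_eq_conjTranspose, hdetU], ?_, ?_⟩
  · rw [balancing_mul_star_inv ht0 hU, show balancing d t * star U * a * (U * balancing d t⁻¹) =
      balancing d t * (star U * a * U) * balancing d t⁻¹ by simp only [mul_assoc]]
    have hTa : ‖star U * a * U‖ = ‖a‖ := by
      rw [CStarRing.norm_mul_mem_unitary _ hU,
        CStarRing.norm_mem_unitary_mul _ (Unitary.star_mem hU)]
    refine l2_opNorm_balancing_conj_le hT ht hdiag fun i j => ?_
    rw [div_mul_cancel₀ _ (by linarith), ← hTa]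
    exact norm_apply_le_l2_opNorm _ i j
  · rw [balancing_mul_star_inv ht0 hU, CStarRing.norm_mul_mem_unitary _ (Unitary.star_mem hU),
      CStarRing.norm_mem_unitary_mul _ hU]
    exact max_le ((l2_opNorm_balancing_le ht).trans hta) ((l2_opNorm_balancing_inv_le ht).trans hta)

/-- **Conjugating to almost minimal norm.** Let `a ∈ SL_d(ℂ)`. Then there is `h ∈ SL_d(ℂ)` with
`‖h a h⁻¹‖ ≤ d · Λ(a)` and `max{‖h‖, ‖h⁻¹‖} ≤ ‖a‖^{(d−1)/2}`, where `Λ(a)` is the maximal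
modulus of the eigenvalues of `a`. -/
theorem conjugate_norm_bound (d : ℕ) (a : Matrix (Fin d) (Fin d) ℂ) (ha : a.det = 1) :
    ∃ h : Matrix (Fin d) (Fin d) ℂ, h.det = 1 ∧
      matrixOpNorm (h * a * h⁻¹) ≤ (d : ℝ) * sSup ((fun z : ℂ => ‖z‖) '' spectrum ℂ a) ∧
      max (matrixOpNorm h) (matrixOpNorm h⁻¹) ≤
        matrixOpNorm a ^ (((d : ℝ) - 1) / 2) := by
  simp only [matrixOpNorm_eq_l2_opNorm]
  obtain rfl | hd := Nat.eq_zero_or_pos d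
  · refine ⟨1, det_one, ?_, ?_⟩ <;> simp [Subsingleton.elim _ (0 : Matrix (Fin 0) (Fin 0) ℂ)]
  have : NeZero d := ⟨hd.ne'⟩
  obtain ⟨U, hU, hT⟩ := exists_mem_specialUnitaryGroup_isUpperTriangular a
  have hdiag (i : Fin d) : ‖(star U * a * U) i i‖ ≤ sSup ((fun z : ℂ => ‖z‖) '' spectrum ℂ a) := by
    refine norm_le_sSup_norm_spectrum ?_
    rw [← Unitary.spectrum_star_left_conjugate (U := ⟨U, hU.1⟩), hT.spectrum_eq]
    exact ⟨i, rfl⟩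
  have hdetT : (star U * a * U).det = 1 := by
    simp [det_mul, star_eq_conjTranspose, (mem_specialUnitaryGroup_iff.mp hU).2, ha]
  exact exists_det_eq_one_conj_l2_opNorm_le hU hT (hT.one_le_of_norm_diag_le hdetT hdiag)
    (sSup_norm_spectrum_le_norm a) hdiag
end

section
/- Let Γ be a group, let F be a finite subset of Γ containing the identity such that F together with the inverses of its elements generates Γ, and let Γ_0 be a subgroup of Γ of finite index k. Then the set of elements of Γ_0 expressible as a product of at most 2k+1 elements of F ∪ F⁻¹ generates Γ_0. -/
/-!
Write `S = F ∪ F⁻¹`, so that `1 ∈ S` and the balls `Sⁿ` increase. The images of the balls in the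
`k`-element coset space grow strictly until they stabilise, and once they stabilise they exhaust
it; hence every coset of `Γ₀` meets `S^(k-1)`, giving a transversal `T ⊆ S^(k-1)` with `1 ∈ T`.
By Schreier's lemma `Γ₀` is generated by the elements `t s t'⁻¹` with `t, t' ∈ T`, `s ∈ S`, and
these lie in `Γ₀ ∩ S^(2k-1)`.
-/

open scoped Pointwise

theorem Set.exists_list_of_mem_pow {α : Type*} [Monoid α] {s : Set α} {n : ℕ} {a : α}
    (ha : a ∈ s ^ n) : ∃ l : List α, l.length = n ∧ (∀ x ∈ l, x ∈ s) ∧ l.prod = a := by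
  obtain ⟨f, rfl⟩ := Set.mem_pow.1 ha
  exact ⟨List.ofFn fun i ↦ (f i : α), List.length_ofFn, by simp, rfl⟩

theorem Set.exists_mem_pow_of_mem_closure {M : Type*} [Monoid M] {s : Set M} {a : M}
    (ha : a ∈ Submonoid.closure s) : ∃ n, a ∈ s ^ n := by
  induction ha using Submonoid.closure_induction with
  | mem a ha => exact ⟨1, by simpa using ha⟩
  | one => exact ⟨0, by simp⟩
  | mul a b _ _ iha ihb =>
    obtain ⟨m, hm⟩ := iha
    obtain ⟨n, hn⟩ := ihb
    exact ⟨m + n, pow_add s m n ▸ Set.mul_mem_mul hm hn⟩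

theorem Monotone.apply_card_sub_one_eq_univ {X : Type*} [Finite X] {B : ℕ → Set X}
    (hB : Monotone B) (h0 : (B 0).Nonempty) (hstable : ∀ n, B n = B (n + 1) → B n = .univ) :
    B (Nat.card X - 1) = .univ := by
  have hgrow : ∀ n, B n = .univ ∨ n + 1 ≤ (B n).ncard := by
    intro n
    induction n with
    | zero => exact .inr ((Set.ncard_pos (Set.toFinite _)).2 h0)
    | succ n ih =>
      rcases ih with h | h
      · exact .inl (Set.eq_univ_of_univ_subset (h ▸ hB (Nat.le_add_right n 1)))
      · by_cases heq : B n = B (n + 1)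
        · exact .inl (heq ▸ hstable n heq)
        · have := Set.ncard_lt_ncard ((hB (Nat.le_add_right n 1)).ssubset_of_ne heq)
            (Set.toFinite _)
          exact .inr (by omega)
  rcases hgrow (Nat.card X - 1) with h | h
  · exact h
  · refine Set.eq_of_subset_of_ncard_le (Set.subset_univ _) ?_ (Set.toFinite _)
    have : 0 < Nat.card X := Nat.card_pos_iff.2 ⟨⟨h0.some⟩, inferInstance⟩
    rw [Set.ncard_univ]
    omega

theorem MulAction.pow_smul_singleton_eq_univ {M X : Type*} [Monoid M] [MulAction M X] [Finite X]
    [IsPretransitive M X] {S : Set M} (hS1 : 1 ∈ S) (hS : Submonoid.closure S = ⊤) (x : X) :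
    S ^ (Nat.card X - 1) • ({x} : Set X) = .univ := by
  set B : ℕ → Set X := fun n ↦ S ^ n • {x}
  have hB : Monotone B := fun m n hmn ↦ Set.smul_subset_smul_right (Set.pow_right_monotone hS1 hmn)
  have hsucc : ∀ n, B (n + 1) = S • B n := fun n ↦ by simp only [B, pow_succ', mul_smul]
  refine hB.apply_card_sub_one_eq_univ ⟨x, by simp [B]⟩ fun n hn ↦ ?_
  have hshift : ∀ j, B (n + j) = B n := by
    intro j
    induction j with
    | zero => rfl
    | succ j ih => rw [← add_assoc, hsucc, ih, ← hsucc, ← hn]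
  refine Set.eq_univ_of_forall fun y ↦ ?_
  obtain ⟨g, rfl⟩ := exists_smul_eq M x y
  obtain ⟨m, hm⟩ := Set.exists_mem_pow_of_mem_closure (hS ▸ Submonoid.mem_top g)
  have hy : g • x ∈ B m := Set.smul_mem_smul hm rfl
  rcases le_total m n with h | h
  · exact hB h hy
  · rw [← hshift (m - n)]
    exact hB (by omega) hy

namespace Subgroup

variable {G : Type*} [Group G] (H : Subgroup G) [H.FiniteIndex] {S : Set G}

/-- The left cosets are reached through the action of `G` on `G ⧸ H`; inversion carries them to
the right cosets and preserves the symmetric ball. -/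
theorem exists_mem_pow_mk''_eq (hS1 : 1 ∈ S) (hSinv : S⁻¹ = S) (hS : closure S = ⊤)
    (q : Quotient (QuotientGroup.rightRel H)) :
    ∃ g ∈ S ^ (H.index - 1), Quotient.mk'' g = q := by
  have hmon : Submonoid.closure S = ⊤ := by
    rw [← Set.union_self S, ← congrArg (S ∪ ·) hSinv, ← closure_toSubmonoid, hS, top_toSubmonoid]
  induction q using Quotient.inductionOn' with | h a => ?_
  have hmem : ((a⁻¹ : G) : G ⧸ H) ∈ S ^ (H.index - 1) • {((1 : G) : G ⧸ H)} :=
    MulAction.pow_smul_singleton_eq_univ (X := G ⧸ H) hS1 hmon _ ▸ Set.mem_univ _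
  rw [Set.smul_singleton, Set.mem_image] at hmem
  obtain ⟨g, hg, hga⟩ := hmem
  refine ⟨g⁻¹, by rwa [← hSinv, inv_pow, Set.inv_mem_inv], ?_⟩
  rw [MulAction.Quotient.smul_coe, smul_eq_mul, mul_one, QuotientGroup.eq] at hga
  exact Quotient.sound' (by simpa [QuotientGroup.rightRel_apply] using H.inv_mem hga)

theorem exists_isComplement_right_subset_pow (hS1 : 1 ∈ S) (hSinv : S⁻¹ = S)
    (hS : closure S = ⊤) : ∃ T, IsComplement H T ∧ 1 ∈ T ∧ T ⊆ S ^ (H.index - 1) := by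
  have hcoset : ∀ q : Quotient (QuotientGroup.rightRel H), ∃ g ∈ S ^ (H.index - 1),
      Quotient.mk'' g = q ∧ (q = Quotient.mk'' 1 → g = 1) := by
    intro q
    by_cases hq : q = Quotient.mk'' 1
    · exact ⟨1, Set.one_mem_pow hS1, hq.symm, fun _ ↦ rfl⟩
    · obtain ⟨g, hg, hgq⟩ := exists_mem_pow_mk''_eq H hS1 hSinv hS q
      exact ⟨g, hg, hgq, fun h ↦ absurd h hq⟩
  choose f hfS hf hf1 using hcoset
  exact ⟨Set.range f, isComplement_range_right hf, ⟨_, hf1 _ rfl⟩, Set.range_subset_iff.2 hfS⟩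

theorem closure_inter_pow_eq (hS1 : 1 ∈ S) (hSinv : S⁻¹ = S) (hS : closure S = ⊤) :
    closure ((H : Set G) ∩ S ^ (2 * H.index - 1)) = H := by
  obtain ⟨T, hT, hT1, hTS⟩ := exists_isComplement_right_subset_pow H hS1 hSinv hS
  refine le_antisymm ((closure_le _).2 Set.inter_subset_left) ?_
  calc H = closure ((T * S).image fun g ↦ g * (hT.toRightFun g : G)⁻¹) :=
        (closure_mul_image_eq hT hT1 hS).symm
    _ ≤ _ := closure_mono ?_
  rintro - ⟨-, ⟨t, ht, s, hs, rfl⟩, rfl⟩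
  refine ⟨hT.mul_inv_toRightFun_mem _, ?_⟩
  have hinv : (hT.toRightFun (t * s) : G)⁻¹ ∈ S ^ (H.index - 1) := by
    rw [← hSinv, inv_pow, Set.inv_mem_inv]
    exact hTS (hT.toRightFun (t * s)).2
  have hk := FiniteIndex.index_ne_zero (H := H)
  rw [show 2 * H.index - 1 = H.index - 1 + 1 + (H.index - 1) by omega, pow_add, pow_succ]
  exact Set.mul_mem_mul (Set.mul_mem_mul (hTS ht) hs) hinv

end Subgroup

theorem finite_index_subgroup_generated_by_short_words_general
    {Γ : Type*} [Group Γ] (F : Set Γ) (h1 : (1 : Γ) ∈ F)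
    (hgen : Subgroup.closure (F ∪ F⁻¹) = ⊤)
    (Γ₀ : Subgroup Γ) (k : ℕ) (hk : Γ₀.index = k) (hk0 : k ≠ 0) :
    Subgroup.closure {x : Γ | x ∈ Γ₀ ∧
        ∃ l : List Γ, l.length ≤ 2 * k + 1 ∧ (∀ g ∈ l, g ∈ F ∪ F⁻¹) ∧ l.prod = x} = Γ₀ := by
  subst hk
  have : Γ₀.FiniteIndex := ⟨hk0⟩
  have hSinv : (F ∪ F⁻¹)⁻¹ = F ∪ F⁻¹ := by rw [Set.union_inv, inv_inv, Set.union_comm]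
  refine le_antisymm ((Subgroup.closure_le _).2 fun x hx ↦ hx.1) ?_
  calc Γ₀ = Subgroup.closure ((Γ₀ : Set Γ) ∩ (F ∪ F⁻¹) ^ (2 * Γ₀.index - 1)) :=
        (Γ₀.closure_inter_pow_eq (.inl h1) hSinv hgen).symm
    _ ≤ _ := Subgroup.closure_mono fun x ⟨hx, hxS⟩ ↦ by
      obtain ⟨l, hl, hlS, hlx⟩ := Set.exists_list_of_mem_pow hxS
      exact ⟨hx, l, by omega, hlS, hlx⟩

/-- **Generating a finite-index subgroup by short words.** Let `F` be a finite subset of a group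
`Γ` containing the identity, such that `F` together with the inverses of its elements generates
`Γ`, and let `Γ₀` be a subgroup of index `k`. Then the set of elements of `Γ₀` expressible as
products of at most `2k+1` elements of `F ∪ F⁻¹` generates `Γ₀`. -/
theorem finite_index_subgroup_generated_by_short_words
    {Γ : Type*} [Group Γ] (F : Set Γ) (hF : F.Finite) (h1 : (1 : Γ) ∈ F)
    (hgen : Subgroup.closure (F ∪ F⁻¹) = ⊤)
    (Γ₀ : Subgroup Γ) (k : ℕ) (hk : Γ₀.index = k) (hk0 : k ≠ 0) :
    Subgroup.closure {x : Γ | x ∈ Γ₀ ∧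
        ∃ l : List Γ, l.length ≤ 2 * k + 1 ∧ (∀ g ∈ l, g ∈ F ∪ F⁻¹) ∧ l.prod = x} = Γ₀ :=
  finite_index_subgroup_generated_by_short_words_general F h1 hgen Γ₀ k hk hk0
end
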